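/- arXiv:2504.19001 — 4 statements merged into one kernel-verified Lean document; each statement's English description precedes it below -/
import Mathlib

section
/- The maximum number of cells (connected components of the complement) in an arrangement of n hyperplanes in R^d, for n > d, is at most Σ_{i=0}^{d} C(n, i). -/
/-!
Two points of the complement on the same side of every hyperplane lie in a common convex region,
so there are at most as many cells as realized sign vectors `{i | w i < ⟪a i, x⟫}`. This family
of subsets of the `n` indices has VC dimension at most `d`: if it shattered a set `s` of indices
whose normals satisfy a relation `∑ i ∈ s, c i • a i = 0` with some `c i ≠ 0`, then pairing with
a point realizing the sign pattern of `c` gives `∑ c i * w i < 0`, and a point realizing that of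
`-c` gives `∑ c i * w i > 0`. The Sauer–Shelah lemma then bounds the number of sign vectors.
-/

open Finset Module
open scoped RealInnerProductSpace

theorem ConnectedComponents.coe_eq_coe_of_isPreconnected {X : Type*} [TopologicalSpace X]
    {p : X → Prop} {S : Set X} (hS : IsPreconnected S) (hSp : ∀ x ∈ S, p x) {x y : Subtype p}
    (hx : x.1 ∈ S) (hy : y.1 ∈ S) : (x : ConnectedComponents (Subtype p)) = y := by
  have himage : Subtype.val '' (Subtype.val ⁻¹' S : Set (Subtype p)) = S := by
    rw [Set.image_preimage_eq_inter_range, Subtype.range_val_subtype]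
    exact Set.inter_eq_left.2 hSp
  have hpre : IsPreconnected (Subtype.val ⁻¹' S : Set (Subtype p)) :=
    Topology.IsEmbedding.subtypeVal.isInducing.isPreconnected_image.1 (by rwa [himage])
  exact (ConnectedComponents.coe_eq_coe'.2 (hpre.subset_connectedComponent hx hy)).symm

theorem ConnectedComponents.natCard_le_card_of_fibers {X β : Type*} [TopologicalSpace X]
    (f : X → β) (s : Finset β) (hfs : ∀ x, f x ∈ s)
    (hf : ∀ x y, f x = f y → (x : ConnectedComponents X) = y) :
    Nat.card (ConnectedComponents X) ≤ #s := by
  have hrange : Set.range f ⊆ s := Set.range_subset_iff.2 hfs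
  have : Finite (Set.range f) := (s.finite_toSet.subset hrange).to_subtype
  calc Nat.card (ConnectedComponents X)
      ≤ Nat.card (Set.range f) := by
        refine Nat.card_le_card_of_surjective (fun y => (Set.rangeSplitting f y : _)) ?_
        refine ConnectedComponents.surjective_coe.forall.2 fun x => ⟨Set.rangeFactorization f x, ?_⟩
        exact hf _ _ (Set.apply_rangeSplitting f _)
    _ ≤ #s := by
        rw [Nat.card_coe_set_eq, ← Set.ncard_coe_finset]
        exact Set.ncard_le_ncard hrange

theorem convex_setOf_ne_and_lt_iff {E : Type*} [NormedAddCommGroup E] [InnerProductSpace ℝ E]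
    (v : E) (c : ℝ) (p : Prop) : Convex ℝ {x : E | ⟪v, x⟫ ≠ c ∧ (c < ⟪v, x⟫ ↔ p)} := by
  have hlin : IsLinearMap ℝ fun x : E => ⟪v, x⟫ :=
    ⟨fun x y => inner_add_right v x y, fun r x => real_inner_smul_right v x r⟩
  by_cases hp : p
  · convert convex_halfSpace_gt hlin c using 1
    ext x
    simp only [Set.mem_ofPred_eq, hp, iff_true]
    exact ⟨And.right, fun h => ⟨h.ne', h⟩⟩
  · convert convex_halfSpace_lt hlin c using 1
    ext x
    simp only [Set.mem_ofPred_eq, hp, iff_false, not_lt]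
    exact ⟨fun h => h.2.lt_of_ne h.1, fun h => ⟨h.ne, h.le⟩⟩

namespace HyperplaneArrangement

variable {E ι : Type*} [NormedAddCommGroup E] [InnerProductSpace ℝ E] (a : ι → E) (w : ι → ℝ)

theorem sum_mul_neg_of_sum_smul_eq_zero {s : Finset ι} {c : ι → ℝ} {x : E}
    (hc : ∑ i ∈ s, c i • a i = 0) (hc0 : ∃ i ∈ s, c i ≠ 0) (hx : ∀ i ∈ s, ⟪a i, x⟫ ≠ w i)
    (hsign : ∀ i ∈ s, w i < ⟪a i, x⟫ ↔ 0 < c i) :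
    ∑ i ∈ s, c i * w i < 0 := by
  have hterm : ∀ i ∈ s, c i ≠ 0 → 0 < c i * (⟪a i, x⟫ - w i) := by
    intro i hi hci
    rcases hci.lt_or_gt with hneg | hpos
    · have hlt : ⟪a i, x⟫ < w i :=
        (not_lt.1 fun h => hneg.not_gt ((hsign i hi).1 h)).lt_of_ne (hx i hi)
      exact mul_pos_of_neg_of_neg hneg (sub_neg.2 hlt)
    · exact mul_pos hpos (sub_pos.2 ((hsign i hi).2 hpos))
  have hpos : 0 < ∑ i ∈ s, c i * (⟪a i, x⟫ - w i) := by
    refine sum_pos' (fun i hi => ?_) (hc0.imp fun i ⟨hi, hci⟩ => ⟨hi, hterm i hi hci⟩)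
    by_cases hci : c i = 0
    · simp [hci]
    · exact (hterm i hi hci).le
  have hzero : ∑ i ∈ s, c i * ⟪a i, x⟫ = 0 := by
    simp_rw [← real_inner_smul_left, ← sum_inner, hc, inner_zero_left]
  simp only [mul_sub, sum_sub_distrib, hzero] at hpos
  linarith

variable [Fintype ι]

noncomputable def signVector (x : E) : Finset ι := {i | w i < ⟪a i, x⟫}

open Classical in
noncomputable def signVectors : Finset (Finset ι) :=
  {t | ∃ x : E, (∀ i, ⟪a i, x⟫ ≠ w i) ∧ signVector a w x = t}

theorem lt_inner_iff_mem_signVector {x : E} {i : ι} : w i < ⟪a i, x⟫ ↔ i ∈ signVector a w x := by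
  simp [signVector]

theorem convex_setOf_signVector_eq (t : Finset ι) :
    Convex ℝ {x : E | (∀ i, ⟪a i, x⟫ ≠ w i) ∧ signVector a w x = t} := by
  convert convex_iInter fun i => convex_setOf_ne_and_lt_iff (a i) (w i) (i ∈ t) using 1
  ext x
  simp only [Set.mem_ofPred_eq, Set.mem_iInter, lt_inner_iff_mem_signVector, Finset.ext_iff]
  exact ⟨fun ⟨hne, heq⟩ i => ⟨hne i, heq i⟩, fun h => ⟨fun i => (h i).1, fun i => (h i).2⟩⟩

theorem coe_eq_coe_of_signVector_eq {x y : {x : E // ∀ i, ⟪a i, x⟫ ≠ w i}}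
    (h : signVector a w x = signVector a w y) :
    (x : ConnectedComponents {x : E // ∀ i, ⟪a i, x⟫ ≠ w i}) = y :=
  ConnectedComponents.coe_eq_coe_of_isPreconnected
    (convex_setOf_signVector_eq a w (signVector a w x)).isPreconnected (fun _ hz => hz.1)
    ⟨x.2, rfl⟩ ⟨y.2, h.symm⟩

theorem natCard_connectedComponents_le_card_signVectors :
    Nat.card (ConnectedComponents {x : E // ∀ i, ⟪a i, x⟫ ≠ w i}) ≤ #(signVectors a w) :=
  ConnectedComponents.natCard_le_card_of_fibers (fun x => signVector a w x.1) _
    (fun x => by simpa [signVectors] using ⟨x.1, x.2, rfl⟩)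
    (fun _ _ => coe_eq_coe_of_signVector_eq a w)

section

variable [DecidableEq ι]

theorem exists_signPattern_of_shatters {s t : Finset ι} (hs : (signVectors a w).Shatters s)
    (ht : t ⊆ s) : ∃ x : E, (∀ i, ⟪a i, x⟫ ≠ w i) ∧ ∀ i ∈ s, (w i < ⟪a i, x⟫ ↔ i ∈ t) := by
  obtain ⟨u, hu, rfl⟩ := hs ht
  obtain ⟨x, hx, rfl⟩ : ∃ x : E, (∀ i, ⟪a i, x⟫ ≠ w i) ∧ signVector a w x = u := by
    simpa [signVectors] using hu
  exact ⟨x, hx, fun i hi => by simp [lt_inner_iff_mem_signVector, hi]⟩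

theorem linearIndepOn_of_shatters {s : Finset ι} (hs : (signVectors a w).Shatters s) :
    LinearIndepOn ℝ a s := by
  by_contra hdep
  obtain ⟨c, hc, hc0⟩ := not_linearIndepOn_finset_iff.1 hdep
  have hrealize : ∀ c : ι → ℝ, ∃ x : E, (∀ i, ⟪a i, x⟫ ≠ w i) ∧
      ∀ i ∈ s, (w i < ⟪a i, x⟫ ↔ 0 < c i) := fun c => by
    obtain ⟨x, hx, hsign⟩ := exists_signPattern_of_shatters a w hs (filter_subset (0 < c ·) s)
    exact ⟨x, hx, fun i hi => by simp [hsign i hi, hi]⟩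
  obtain ⟨x, hx, hsign⟩ := hrealize c
  obtain ⟨y, hy, hsign'⟩ := hrealize (-c)
  have hneg := sum_mul_neg_of_sum_smul_eq_zero a w hc hc0 (fun i _ => hx i) hsign
  have hpos := sum_mul_neg_of_sum_smul_eq_zero a w (c := -c)
    (by simp [neg_smul, sum_neg_distrib, hc]) (by simpa using hc0) (fun i _ => hy i) hsign'
  simp only [Pi.neg_apply, neg_mul, sum_neg_distrib, neg_neg_iff_pos] at hpos
  exact hneg.not_gt hpos

theorem vcDim_signVectors_le [FiniteDimensional ℝ E] : (signVectors a w).vcDim ≤ finrank ℝ E :=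
  Finset.sup_le fun s hs => by
    simpa using (linearIndepOn_of_shatters a w (mem_shatterer.1 hs)).fintype_card_le_finrank

end

theorem natCard_connectedComponents_le [FiniteDimensional ℝ E] :
    Nat.card (ConnectedComponents {x : E // ∀ i, ⟪a i, x⟫ ≠ w i})
      ≤ ∑ k ∈ range (finrank ℝ E + 1), (Fintype.card ι).choose k := by
  classical
  calc Nat.card (ConnectedComponents {x : E // ∀ i, ⟪a i, x⟫ ≠ w i})
      ≤ #(signVectors a w) := natCard_connectedComponents_le_card_signVectors a w
    _ ≤ #(signVectors a w).shatterer := card_le_card_shatterer _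
    _ ≤ ∑ k ∈ Iic (signVectors a w).vcDim, (Fintype.card ι).choose k :=
        card_shatterer_le_sum_vcDim
    _ ≤ ∑ k ∈ range (finrank ℝ E + 1), (Fintype.card ι).choose k := by
        rw [Nat.range_succ_eq_Iic]
        exact sum_le_sum_of_subset (Iic_subset_Iic.2 (vcDim_signVectors_le a w))

end HyperplaneArrangement

theorem stmt5_general (d n : ℕ) (a : Fin n → EuclideanSpace ℝ (Fin d)) (w : Fin n → ℝ) :
    Nat.card (ConnectedComponents
        { x : EuclideanSpace ℝ (Fin d) // ∀ i, (inner ℝ (a i) x : ℝ) ≠ w i })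
      ≤ ∑ i ∈ Finset.range (d + 1), n.choose i := by
  simpa using HyperplaneArrangement.natCard_connectedComponents_le a w

/-- An arrangement of `n > d` hyperplanes in `ℝ^d` has at most `∑_{i=0}^{d} C(n,i)` cells
(connected components of the complement of the union of the hyperplanes). -/
theorem stmt5 (d n : ℕ) (hdn : d < n) (a : Fin n → EuclideanSpace ℝ (Fin d))
    (ha : ∀ i, a i ≠ 0) (w : Fin n → ℝ) :
    Nat.card (ConnectedComponents
        { x : EuclideanSpace ℝ (Fin d) // ∀ i, (inner ℝ (a i) x : ℝ) ≠ w i })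
      ≤ ∑ i ∈ Finset.range (d + 1), n.choose i :=
  stmt5_general d n a w
end

section
/- Suppose Q : X* × X̃ → R has the property that for every dataset S, a uniformly random m-element subset S' of S satisfies sup_x |Q(S,x) − Q(S',x)| ≤ α with probability at least 2/3. Then Q has sensitivity at most 2α on datasets of size at least 4m: for any two neighboring datasets S_1, S_2 (multisets of equal size n ≥ 4m differing in one element) and any x, |Q(S_1,x) − Q(S_2,x)| ≤ 2α. -/
/-!
A uniformly random `m`-subset of an `n`-set avoids a fixed index with probability
`C(n-1, m)/C(n, m) = 1 - m/n ≥ 3/4`. Together with the two events "the subset is good for `S₁`"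
and "the subset is good for `S₂`", each of probability at least `2/3`, the total exceeds `2`, so
some subset `I` is good for both datasets and avoids the index where they differ. Then
`S₁` and `S₂` agree on `I`, and the triangle inequality through `Q(S₁|_I) = Q(S₂|_I)` gives `2α`.
-/

open scoped Classical

open Finset

theorem Finset.inter_inter_nonempty_of_two_mul_card_lt {α : Type*} [DecidableEq α]
    {s t r u : Finset α} (hs : s ⊆ u) (ht : t ⊆ u) (hr : r ⊆ u)
    (h : 2 * #u < #s + #t + #r) : (s ∩ t ∩ r).Nonempty := by
  refine inter_nonempty_of_card_lt_card_add_card (inter_subset_left.trans hs) hr ?_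
  have hunion := card_le_card (union_subset hs ht)
  have := card_union_add_card_inter s t
  omega

theorem Nat.three_mul_choose_le_four_mul_choose_pred {n m : ℕ} (h : 4 * m ≤ n) :
    3 * n.choose m ≤ 4 * (n - 1).choose m := by
  obtain _ | k := n
  · obtain rfl : m = 0 := by omega
    simp
  have hk := Nat.choose_mul_succ_eq k m
  have hfrac : 3 * (k + 1) ≤ 4 * (k + 1 - m) := by omega
  have hmul : 3 * (k + 1).choose m * (k + 1) ≤ 4 * k.choose m * (k + 1) := by
    calc 3 * (k + 1).choose m * (k + 1) = (k + 1).choose m * (3 * (k + 1)) := by ring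
      _ ≤ (k + 1).choose m * (4 * (k + 1 - m)) := Nat.mul_le_mul_left _ hfrac
      _ = 4 * k.choose m * (k + 1) := by rw [mul_assoc 4, hk]; ring
  simpa using Nat.le_of_mul_le_mul_right hmul k.succ_pos

section Subsample

variable {X Y : Type*} (Q : Multiset X → Y → ℝ) (α : ℝ) (m : ℕ)

noncomputable def approxSubsets {N : ℕ} (S : Fin N → X) : Finset (Finset (Fin N)) :=
  (powersetCard m univ).filter fun I =>
    ∀ y : Y, |Q (Multiset.map S univ.val) y - Q (Multiset.map S I.val) y| ≤ α

variable {Q α m}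

theorem abs_sub_le_two_mul_of_mem_approxSubsets {N : ℕ} {S₁ S₂ : Fin N → X}
    {I : Finset (Fin N)} (h₁ : I ∈ approxSubsets Q α m S₁) (h₂ : I ∈ approxSubsets Q α m S₂)
    (hI : ∀ i ∈ I, S₁ i = S₂ i) (y : Y) :
    |Q (Multiset.map S₁ univ.val) y - Q (Multiset.map S₂ univ.val) y| ≤ 2 * α := by
  have hsub : Multiset.map S₁ I.val = Multiset.map S₂ I.val := Multiset.map_congr rfl hI
  have g₁ := (mem_filter.1 h₁).2 y
  have g₂ := (mem_filter.1 h₂).2 y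
  rw [hsub] at g₁
  rw [abs_sub_comm] at g₂
  calc _ ≤ |Q (Multiset.map S₁ univ.val) y - Q (Multiset.map S₂ I.val) y| +
        |Q (Multiset.map S₂ I.val) y - Q (Multiset.map S₂ univ.val) y| := abs_sub_le _ _ _
    _ ≤ 2 * α := by linarith

end Subsample

/-- If for every dataset a uniformly random `m`-element subset `α`-approximates `Q`
uniformly in `x` with probability at least `2/3` (i.e. at least a `2/3`-fraction of the
`m`-element index subsets are good), then `Q` has sensitivity at most `2α` on datasets
of size `n ≥ 4m`: neighboring datasets (differing in one entry) have `Q`-values within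
`2α` of each other, for every `x`. -/
theorem stmt6 {X Y : Type*} (Q : Multiset X → Y → ℝ) (α : ℝ) (m : ℕ)
    (happ : ∀ (N : ℕ) (S : Fin N → X),
      (2 / 3 : ℝ) * (N.choose m : ℝ) ≤
        (((Finset.powersetCard m (Finset.univ : Finset (Fin N))).filter
          (fun I : Finset (Fin N) =>
            ∀ y : Y, |Q (Multiset.map S Finset.univ.val) y - Q (Multiset.map S I.val) y| ≤ α)).card : ℝ))
    {n : ℕ} (hn : 4 * m ≤ n) (S₁ S₂ : Fin n → X) (j : Fin n)
    (hdiff : ∀ i, i ≠ j → S₁ i = S₂ i) (y : Y) :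
    |Q (Multiset.map S₁ Finset.univ.val) y - Q (Multiset.map S₂ Finset.univ.val) y| ≤ 2 * α := by
  have hgood (S : Fin n → X) : 2 * n.choose m ≤ 3 * #(approxSubsets Q α m S) := by
    have hS : (2 / 3 : ℝ) * n.choose m ≤ #(approxSubsets Q α m S) := happ n S
    exact_mod_cast (by linarith : (2 * n.choose m : ℝ) ≤ 3 * #(approxSubsets Q α m S))
  have havoid : #(powersetCard m (univ.erase j)) = (n - 1).choose m := by
    rw [card_powersetCard, card_erase_of_mem (mem_univ j), card_univ, Fintype.card_fin]
  have hpos : 0 < n.choose m := Nat.choose_pos (by omega)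
  obtain ⟨I, hI⟩ := inter_inter_nonempty_of_two_mul_card_lt (s := approxSubsets Q α m S₁)
    (t := approxSubsets Q α m S₂) (filter_subset _ _) (filter_subset _ _)
    (powersetCard_mono (erase_subset j univ)) (by
      have hC := Nat.three_mul_choose_le_four_mul_choose_pred hn
      have hA₁ := hgood S₁
      have hA₂ := hgood S₂
      rw [havoid, card_powersetCard, card_univ, Fintype.card_fin]
      omega)
  rw [mem_inter, mem_inter] at hI
  obtain ⟨⟨h₁, h₂⟩, hIavoid⟩ := hI
  refine abs_sub_le_two_mul_of_mem_approxSubsets h₁ h₂ (fun i hi => hdiff i ?_) y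
  rintro rfl
  simpa using (mem_powersetCard.1 hIavoid).1 hi
end

section
/- For any finite multiset S of linear constraints in R^d × R and any x ∈ R^d, depth_S(x) ≥ (d+1)·cdepth_S(x) − d·|S|. -/
/-!
By Carathéodory, `x` is a convex combination of at most `d + 1` points `z`, each of depth at least
`t = cdepth_S(x)`, i.e. each violating at most `|S| - t` constraints. A constraint violated by `x`
is violated by one of these points, since its feasible half-space is convex. Hence `x` violates at
most `(d + 1)(|S| - t)` constraints.
-/

open scoped Classical

noncomputable def depthLF {d : ℕ} (S : Multiset (EuclideanSpace ℝ (Fin d) × ℝ))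
    (x : EuclideanSpace ℝ (Fin d)) : ℕ :=
  Multiset.card (S.filter (fun c => c.2 ≤ (inner ℝ c.1 x : ℝ)))

noncomputable def cdepthLF {d : ℕ} (S : Multiset (EuclideanSpace ℝ (Fin d) × ℝ))
    (x : EuclideanSpace ℝ (Fin d)) : ℕ :=
  sSup { t : ℕ | x ∈ convexHull ℝ { z : EuclideanSpace ℝ (Fin d) | t ≤ depthLF S z } }

theorem Multiset.countP_exists_mem_le_sum {α β : Type*} (s : Multiset α) (T : Finset β)
    (p : β → α → Prop) [∀ b, DecidablePred (p b)] :
    s.countP (fun a => ∃ b ∈ T, p b a) ≤ ∑ b ∈ T, s.countP (p b) := by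
  induction s using Multiset.induction with
  | empty => simp
  | cons a s ih =>
    simp only [Multiset.countP_cons, Finset.sum_add_distrib, Finset.sum_boole, Nat.cast_id]
    gcongr
    split_ifs with h
    · obtain ⟨b, hb, hpb⟩ := h
      exact Finset.card_pos.mpr ⟨b, Finset.mem_filter.mpr ⟨hb, hpb⟩⟩
    · exact Nat.zero_le _

theorem exists_finset_card_le_finrank_succ_of_mem_convexHull {𝕜 E : Type*} [Field 𝕜]
    [LinearOrder 𝕜] [IsStrictOrderedRing 𝕜] [AddCommGroup E] [Module 𝕜 E]
    [FiniteDimensional 𝕜 E] {s : Set E} {x : E} (hx : x ∈ convexHull 𝕜 s) :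
    ∃ T : Finset E, ↑T ⊆ s ∧ T.card ≤ Module.finrank 𝕜 E + 1 ∧ x ∈ convexHull 𝕜 (T : Set E) := by
  rw [convexHull_eq_union] at hx
  simp only [Set.mem_iUnion] at hx
  obtain ⟨T, hTs, hT, hxT⟩ := hx
  refine ⟨T, hTs, ?_, hxT⟩
  have := hT.card_le_finrank_succ
  simp only [Fintype.card_coe] at this
  have := Submodule.finrank_le (vectorSpan 𝕜 (Set.range ((↑) : T → E)))
  omega

section depth

variable {d : ℕ} (S : Multiset (EuclideanSpace ℝ (Fin d) × ℝ))

noncomputable def violationsLF (z : EuclideanSpace ℝ (Fin d)) : ℕ :=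
  S.countP (fun c => (inner ℝ c.1 z : ℝ) < c.2)

theorem depthLF_add_violationsLF (z : EuclideanSpace ℝ (Fin d)) :
    depthLF S z + violationsLF S z = Multiset.card S := by
  simp only [depthLF, violationsLF, ← Multiset.countP_eq_card_filter, ← not_le]
  exact (Multiset.card_eq_countP_add_countP _ S).symm

theorem violationsLF_le_sum_of_mem_convexHull {T : Finset (EuclideanSpace ℝ (Fin d))}
    {x : EuclideanSpace ℝ (Fin d)} (hx : x ∈ convexHull ℝ (T : Set _)) :
    violationsLF S x ≤ ∑ z ∈ T, violationsLF S z := by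
  have hwitness : ∀ c : EuclideanSpace ℝ (Fin d) × ℝ, (inner ℝ c.1 x : ℝ) < c.2 →
      ∃ z ∈ T, (inner ℝ c.1 z : ℝ) < c.2 := fun c hc => by
    obtain ⟨z, hzT, hz⟩ := ((innerₗ _ c.1).concaveOn convex_univ).exists_le_of_mem_convexHull
      (Set.subset_univ _) hx
    exact ⟨z, hzT, lt_of_le_of_lt hz hc⟩
  calc violationsLF S x
      ≤ S.countP (fun c => ∃ z ∈ T, (inner ℝ c.1 z : ℝ) < c.2) := by
        simp only [violationsLF, Multiset.countP_eq_card_filter]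
        exact Multiset.card_le_card (Multiset.monotone_filter_right S hwitness)
    _ ≤ ∑ z ∈ T, violationsLF S z := Multiset.countP_exists_mem_le_sum S T _

theorem cdepthLF_set_subset_Iic (x : EuclideanSpace ℝ (Fin d)) :
    { t : ℕ | x ∈ convexHull ℝ { z : EuclideanSpace ℝ (Fin d) | t ≤ depthLF S z } } ⊆
      Set.Iic (Multiset.card S) := by
  intro t ht
  by_contra! hlt
  rw [Set.mem_Iic, not_le] at hlt
  have hempty : { z : EuclideanSpace ℝ (Fin d) | t ≤ depthLF S z } = ∅ :=
    Set.eq_empty_of_forall_notMem fun z hz =>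
      (lt_of_le_of_lt (Multiset.card_le_card (Multiset.filter_le _ _)) hlt).not_ge hz
  simp [hempty] at ht

theorem mem_convexHull_cdepthLF (x : EuclideanSpace ℝ (Fin d)) :
    x ∈ convexHull ℝ { z : EuclideanSpace ℝ (Fin d) | cdepthLF S x ≤ depthLF S z } :=
  Nat.sSup_mem ⟨0, by simp⟩ ⟨_, cdepthLF_set_subset_Iic S x⟩

theorem cdepthLF_le_card (x : EuclideanSpace ℝ (Fin d)) : cdepthLF S x ≤ Multiset.card S :=
  cdepthLF_set_subset_Iic S x (mem_convexHull_cdepthLF S x)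

theorem violationsLF_le_mul_card_sub_cdepthLF (x : EuclideanSpace ℝ (Fin d)) :
    violationsLF S x ≤ (d + 1) * (Multiset.card S - cdepthLF S x) := by
  obtain ⟨T, hTs, hTcard, hxT⟩ :=
    exists_finset_card_le_finrank_succ_of_mem_convexHull (mem_convexHull_cdepthLF S x)
  rw [finrank_euclideanSpace_fin] at hTcard
  have hT : ∀ z ∈ T, violationsLF S z ≤ Multiset.card S - cdepthLF S x := fun z hz => by
    have := depthLF_add_violationsLF S z
    have : cdepthLF S x ≤ depthLF S z := hTs hz
    omega
  calc violationsLF S x ≤ ∑ z ∈ T, violationsLF S z :=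
        violationsLF_le_sum_of_mem_convexHull S hxT
    _ ≤ T.card * (Multiset.card S - cdepthLF S x) := Finset.sum_le_card_nsmul _ _ _ hT
    _ ≤ (d + 1) * (Multiset.card S - cdepthLF S x) := Nat.mul_le_mul_right _ hTcard

end depth

/-- `depth_S(x) ≥ (d+1)·cdepth_S(x) − d·|S|`. -/
theorem stmt9 {d : ℕ} (S : Multiset (EuclideanSpace ℝ (Fin d) × ℝ))
    (x : EuclideanSpace ℝ (Fin d)) :
    ((d : ℝ) + 1) * (cdepthLF S x : ℝ) - (d : ℝ) * (Multiset.card S : ℝ)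
      ≤ (depthLF S x : ℝ) := by
  have hsplit : ((depthLF S x + violationsLF S x : ℕ) : ℝ) = Multiset.card S := by
    exact_mod_cast depthLF_add_violationsLF S x
  have hviol : (violationsLF S x : ℝ) ≤ ((d + 1) * (Multiset.card S - cdepthLF S x) : ℕ) := by
    exact_mod_cast violationsLF_le_mul_card_sub_cdepthLF S x
  push_cast [cdepthLF_le_card S x] at hsplit hviol
  linarith
end

section
/- Let S be a multiset of n constraints in R^d × R and S' ⊆ S a subset of size m such that for every point p ∈ R^d, |depth_S(p)/n − depth_{S'}(p)/m| ≤ α. Then for every point p ∈ R^d, |cdepth_S(p)/n − cdepth_{S'}(p)/m| ≤ α. -/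
open scoped Classical

/-!
`cdepth_S(p) ≥ k` exactly when `p` lies in the convex hull of the superlevel set
`{depth_S ≥ k}`. If `depth_S/n - α ≤ depth_{S'}/m` everywhere, then every superlevel set
`{depth_S ≥ a}` lies inside `{depth_{S'} ≥ ⌈m (a/n - α)⌉}`, and taking convex hulls with
`a = cdepth_S(p)` gives `cdepth_S(p)/n - α ≤ cdepth_{S'}(p)/m`. Exchanging the roles of
`S` and `S'` gives the other half of the absolute value.
-/

section Depth

variable {d : ℕ} (S : Multiset (EuclideanSpace ℝ (Fin d) × ℝ)) (p : EuclideanSpace ℝ (Fin d))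

lemma depthLF_le_card (z : EuclideanSpace ℝ (Fin d)) : depthLF S z ≤ Multiset.card S :=
  Multiset.card_le_card (Multiset.filter_le _ _)

lemma bddAbove_setOf_mem_convexHull_depthLF :
    BddAbove { t : ℕ | p ∈ convexHull ℝ { z : EuclideanSpace ℝ (Fin d) | t ≤ depthLF S z } } := by
  refine ⟨Multiset.card S, fun t ht => ?_⟩
  by_contra! hlt
  have hempty : { z : EuclideanSpace ℝ (Fin d) | t ≤ depthLF S z } = ∅ :=
    Set.eq_empty_of_forall_notMem fun z hz => (depthLF_le_card S z).not_gt (hlt.trans_le hz)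
  simp [hempty] at ht

lemma mem_convexHull_setOf_cdepthLF_le_depthLF :
    p ∈ convexHull ℝ { z : EuclideanSpace ℝ (Fin d) | cdepthLF S p ≤ depthLF S z } :=
  Nat.sSup_mem ⟨0, subset_convexHull ℝ { z | 0 ≤ depthLF S z } (Nat.zero_le (depthLF S p))⟩
    (bddAbove_setOf_mem_convexHull_depthLF S p)

lemma le_cdepthLF_iff (k : ℕ) :
    k ≤ cdepthLF S p ↔ p ∈ convexHull ℝ { z : EuclideanSpace ℝ (Fin d) | k ≤ depthLF S z } :=
  ⟨fun hk => convexHull_mono (fun _ (hz : cdepthLF S p ≤ depthLF S _) => hk.trans hz)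
      (mem_convexHull_setOf_cdepthLF_le_depthLF S p),
    fun hp => le_csSup (bddAbove_setOf_mem_convexHull_depthLF S p) hp⟩

end Depth

lemma cdepthLF_div_sub_le_of_depthLF {d : ℕ} {T U : Multiset (EuclideanSpace ℝ (Fin d) × ℝ)}
    {n m : ℕ} (hm : 0 < m) {α : ℝ}
    (h : ∀ z, (depthLF T z : ℝ) / n - α ≤ (depthLF U z : ℝ) / m)
    (p : EuclideanSpace ℝ (Fin d)) :
    (cdepthLF T p : ℝ) / n - α ≤ (cdepthLF U p : ℝ) / m := by
  have hm' : (0 : ℝ) < m := Nat.cast_pos.mpr hm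
  set a := cdepthLF T p
  have superlevel_subset : { z | a ≤ depthLF T z } ⊆
      { z | ⌈((a : ℝ) / n - α) * m⌉₊ ≤ depthLF U z } := by
    intro z (hz : a ≤ depthLF T z)
    have hza : (a : ℝ) / n ≤ (depthLF T z : ℝ) / n := by gcongr
    exact Nat.ceil_le.mpr ((le_div_iff₀ hm').mp (by linarith [h z]))
  have hceil : ⌈((a : ℝ) / n - α) * m⌉₊ ≤ cdepthLF U p :=
    (le_cdepthLF_iff U p _).mpr
      (convexHull_mono superlevel_subset (mem_convexHull_setOf_cdepthLF_le_depthLF T p))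
  rw [le_div_iff₀ hm']
  exact (Nat.le_ceil _).trans (by exact_mod_cast hceil)

theorem stmt12_general {d : ℕ} (S S' : Multiset (EuclideanSpace ℝ (Fin d) × ℝ))
    (α : ℝ) (n m : ℕ)
    (hn0 : 0 < n) (hm0 : 0 < m)
    (happ : ∀ p : EuclideanSpace ℝ (Fin d),
      |(depthLF S p : ℝ) / (n : ℝ) - (depthLF S' p : ℝ) / (m : ℝ)| ≤ α) :
    ∀ p : EuclideanSpace ℝ (Fin d),
      |(cdepthLF S p : ℝ) / (n : ℝ) - (cdepthLF S' p : ℝ) / (m : ℝ)| ≤ α := by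
  intro p
  have hS := cdepthLF_div_sub_le_of_depthLF (T := S) (U := S') hm0
    (fun z => sub_le_comm.mp (abs_sub_le_iff.mp (happ z)).1) p
  have hS' := cdepthLF_div_sub_le_of_depthLF (T := S') (U := S) hn0
    (fun z => sub_le_comm.mp (abs_sub_le_iff.mp (happ z)).2) p
  exact abs_sub_le_iff.mpr ⟨sub_le_comm.mp hS, sub_le_comm.mp hS'⟩

/-- If the relative depth function of `S` is uniformly `α`-approximated by the subset
`S'`, then so is its convexification `cdepth`. -/
theorem stmt12 {d : ℕ} (S S' : Multiset (EuclideanSpace ℝ (Fin d) × ℝ)) (hsub : S' ≤ S)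
    (α : ℝ) (n m : ℕ) (hn : Multiset.card S = n) (hm : Multiset.card S' = m)
    (hn0 : 0 < n) (hm0 : 0 < m)
    (happ : ∀ p : EuclideanSpace ℝ (Fin d),
      |(depthLF S p : ℝ) / (n : ℝ) - (depthLF S' p : ℝ) / (m : ℝ)| ≤ α) :
    ∀ p : EuclideanSpace ℝ (Fin d),
      |(cdepthLF S p : ℝ) / (n : ℝ) - (cdepthLF S' p : ℝ) / (m : ℝ)| ≤ α :=
  stmt12_general S S' α n m hn0 hm0 happ
end
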